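/- Let E be a finite-dimensional real inner product space, and let W ⊆ V be closed convex cones in E, each containing 0, with W ≠ V and with V containing no line, i.e., V ∩ (−V) = {0}. Then there exist a vector y ∈ E and a point z₀ ∈ V \ {0} such that ⟨y, z⟩ ≥ 0 for every z ∈ V, ⟨y, z⟩ > 0 for every z ∈ W \ {0}, and ⟨y, z₀⟩ = 0. -/

import Mathlib

/-!
Separate a point `x ∈ V \ W` from `W` by a functional `u ≥ 0` on `W` with `⟪u, x⟫ < 0`, and
let `s` be strictly positive on `V \ {0}`, which exists because `V` is salient. On the compact
base `K = V ∩ S` of `V`, the functional `u + t • s` with `t = max_K (-⟪u, ·⟫ / ⟪s, ·⟫) > 0` is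
nonnegative and vanishes at the maximiser, while on `W \ {0}` it is positive since both `u` and
`t • s` contribute nonnegatively and the second strictly.
-/

open RealInnerProductSpace Metric

theorem IsCompact.exists_pos_add_mul_nonneg_and_eq_zero {X : Type*} [TopologicalSpace X]
    {K : Set X} (hK : IsCompact K) {f g : X → ℝ} (hf : ContinuousOn f K)
    (hg : ContinuousOn g K) (hg_pos : ∀ x ∈ K, 0 < g x) {x₁ : X} (hx₁ : x₁ ∈ K)
    (hfx₁ : f x₁ < 0) :
    ∃ t > 0, (∀ x ∈ K, 0 ≤ f x + t * g x) ∧ ∃ x₀ ∈ K, f x₀ + t * g x₀ = 0 := by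
  obtain ⟨x₀, hx₀, hmax⟩ := hK.exists_isMaxOn ⟨x₁, hx₁⟩
    (hf.neg.div hg fun x hx => (hg_pos x hx).ne')
  have hg₀ := hg_pos x₀ hx₀
  refine ⟨-f x₀ / g x₀, ?_, fun x hx => ?_, x₀, hx₀, ?_⟩
  · calc 0 < -f x₁ / g x₁ := div_pos (neg_pos.2 hfx₁) (hg_pos x₁ hx₁)
      _ ≤ -f x₀ / g x₀ := hmax hx₁
  · have : -f x / g x ≤ -f x₀ / g x₀ := hmax hx
    rw [div_le_iff₀ (hg_pos x hx)] at this
    linarith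
  · rw [div_mul_cancel₀ _ hg₀.ne']
    ring

namespace ConvexCone

variable {E : Type*} [NormedAddCommGroup E] [InnerProductSpace ℝ E]

theorem inv_norm_smul_mem_inter_sphere {V : ConvexCone ℝ E} {z : E} (hz : z ∈ V) (hz0 : z ≠ 0) :
    ‖z‖⁻¹ • z ∈ (V : Set E) ∩ sphere 0 1 :=
  ⟨V.smul_mem (inv_pos.2 (norm_pos_iff.2 hz0)) hz, by
    simpa using norm_smul_inv_norm (𝕜 := ℝ) hz0⟩

theorem inner_pos_of_forall_inter_sphere {V : ConvexCone ℝ E} {y : E}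
    (h : ∀ k ∈ (V : Set E) ∩ sphere 0 1, 0 < ⟪y, k⟫) {z : E} (hz : z ∈ V) (hz0 : z ≠ 0) :
    0 < ⟪y, z⟫ := by
  have := h _ (inv_norm_smul_mem_inter_sphere hz hz0)
  rwa [real_inner_smul_right, mul_pos_iff_of_pos_left (inv_pos.2 (norm_pos_iff.2 hz0))] at this

theorem inner_nonneg_of_forall_inter_sphere {V : ConvexCone ℝ E} {y : E}
    (h : ∀ k ∈ (V : Set E) ∩ sphere 0 1, 0 ≤ ⟪y, k⟫) {z : E} (hz : z ∈ V) : 0 ≤ ⟪y, z⟫ := by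
  rcases eq_or_ne z 0 with rfl | hz0
  · simp
  have := h _ (inv_norm_smul_mem_inter_sphere hz hz0)
  rw [real_inner_smul_right] at this
  exact nonneg_of_mul_nonneg_right this (inv_pos.2 (norm_pos_iff.2 hz0))

theorem exists_inner_nonneg_and_inner_neg_of_notMem [CompleteSpace E] (C : ConvexCone ℝ E)
    (h0 : (0 : E) ∈ C) (hC : IsClosed (C : Set E)) {x₀ : E} (hx₀ : x₀ ∉ C) :
    ∃ y : E, (∀ x ∈ C, 0 ≤ ⟪y, x⟫) ∧ ⟪y, x₀⟫ < 0 := by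
  obtain ⟨y, hC_y, hx₀_y⟩ :=
    ProperCone.hyperplane_separation' (⟨C.toPointedCone h0, hC⟩ : ProperCone ℝ E) hx₀
  exact ⟨y, fun x hx => real_inner_comm x y ▸ hC_y x hx, real_inner_comm x₀ y ▸ hx₀_y⟩

theorem exists_inner_pos_of_salient [FiniteDimensional ℝ E] (V : ConvexCone ℝ E)
    (h0 : (0 : E) ∈ V) (hV : IsClosed (V : Set E)) (hsalient : ∀ z ∈ V, -z ∈ V → z = 0) :
    ∃ s : E, ∀ z ∈ V, z ≠ 0 → 0 < ⟪s, z⟫ := by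
  have : CompleteSpace E := FiniteDimensional.complete ℝ E
  have hsep : ∀ k : ↥((V : Set E) ∩ sphere 0 1),
      ∃ v : E, (∀ x ∈ V, 0 ≤ ⟪v, x⟫) ∧ 0 < ⟪v, (k : E)⟫ := by
    rintro ⟨k, hkV, hkS⟩
    have hk0 : k ≠ 0 := ne_zero_of_mem_sphere one_ne_zero ⟨k, hkS⟩
    obtain ⟨v, hv, hvk⟩ := V.exists_inner_nonneg_and_inner_neg_of_notMem h0 hV
      fun h => hk0 (hsalient k hkV h)
    exact ⟨v, hv, by simpa using hvk⟩
  choose v hv_nonneg hv_pos using hsep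
  obtain ⟨t, ht⟩ := ((isCompact_sphere 0 1).inter_left hV).elim_finite_subcover
    (fun k => {x : E | 0 < ⟪v k, x⟫})
    (fun k => isOpen_lt continuous_const (continuous_const.inner continuous_id))
    fun k hk => Set.mem_iUnion.2 ⟨⟨k, hk⟩, hv_pos ⟨k, hk⟩⟩
  refine ⟨∑ i ∈ t, v i, fun z hz hz0 => inner_pos_of_forall_inter_sphere (fun k hk => ?_) hz hz0⟩
  obtain ⟨i, hi, hik⟩ := Set.mem_iUnion₂.1 (ht hk)
  rw [sum_inner]
  exact Finset.sum_pos' (fun j _ => hv_nonneg j k hk.1) ⟨i, hi, hik⟩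

end ConvexCone

/-- If `W ⊆ V` are closed convex cones (each containing `0`) in a finite-dimensional
real inner product space, with `W ≠ V` and `V` containing no line, then there are a
vector `y` and a nonzero point `z₀ ∈ V` such that `⟪y, ·⟫` is nonnegative on `V`,
strictly positive on `W \ {0}`, and vanishes at `z₀`. -/
theorem stmt2 {E : Type*} [NormedAddCommGroup E] [InnerProductSpace ℝ E]
    [FiniteDimensional ℝ E]
    (W V : ConvexCone ℝ E) (hWclosed : IsClosed (W : Set E))
    (hVclosed : IsClosed (V : Set E))
    (hW0 : (0 : E) ∈ W) (hV0 : (0 : E) ∈ V)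
    (hWV : (W : Set E) ⊆ (V : Set E)) (hne : (W : Set E) ≠ (V : Set E))
    (hline : ∀ z ∈ V, -z ∈ V → z = 0) :
    ∃ y z₀ : E, z₀ ∈ V ∧ z₀ ≠ 0 ∧ (∀ z ∈ V, 0 ≤ ⟪y, z⟫) ∧
      (∀ z ∈ W, z ≠ 0 → 0 < ⟪y, z⟫) ∧ ⟪y, z₀⟫ = 0 := by
  have : CompleteSpace E := FiniteDimensional.complete ℝ E
  obtain ⟨x, hxV, hxW⟩ := Set.exists_of_ssubset (hWV.ssubset_of_ne hne)
  have hx0 : x ≠ 0 := fun h => hxW (h ▸ hW0)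
  obtain ⟨u, hu_nonneg, hux⟩ := W.exists_inner_nonneg_and_inner_neg_of_notMem hW0 hWclosed hxW
  obtain ⟨s, hs_pos⟩ := V.exists_inner_pos_of_salient hV0 hVclosed hline
  have hux₁ : ⟪u, ‖x‖⁻¹ • x⟫ < 0 := by
    rw [real_inner_smul_right]
    exact mul_neg_of_pos_of_neg (inv_pos.2 (norm_pos_iff.2 hx0)) hux
  obtain ⟨t, ht, hy_nonneg, z₀, hz₀, hyz₀⟩ :=
    ((isCompact_sphere 0 1).inter_left hVclosed).exists_pos_add_mul_nonneg_and_eq_zero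
      (continuous_const.inner continuous_id).continuousOn
      (continuous_const.inner continuous_id).continuousOn
      (fun k hk => hs_pos k hk.1 (ne_zero_of_mem_sphere one_ne_zero ⟨k, hk.2⟩))
      (ConvexCone.inv_norm_smul_mem_inter_sphere hxV hx0) hux₁
  have hy : ∀ z, ⟪u + t • s, z⟫ = ⟪u, z⟫ + t * ⟪s, z⟫ := fun z => by
    rw [inner_add_left, real_inner_smul_left]
  refine ⟨u + t • s, z₀, hz₀.1, ne_zero_of_mem_sphere one_ne_zero ⟨z₀, hz₀.2⟩,
    fun z hz => ConvexCone.inner_nonneg_of_forall_inter_sphere (fun k hk => ?_) hz,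
    fun w hw hw0 => ?_, by rw [hy]; exact hyz₀⟩
  · rw [hy]; exact hy_nonneg k hk
  · rw [hy]
    exact add_pos_of_nonneg_of_pos (hu_nonneg w hw) (mul_pos ht (hs_pos w (hWV hw) hw0))
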